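/- arXiv:1909.03419 — 3 statements merged into one kernel-verified Lean document; each statement's English description precedes it below -/
import Mathlib

section
/- Assume ξ_i ≥ 0, ξ_j ≥ 0, ξ_k ≥ 0. For all positive reals r_i, r_j, r_k, in the Euclidean case one has r_j · (∂ϑ_i/∂r_j)(r_i, r_j, r_k) = r_i · (∂ϑ_j/∂r_i)(r_i, r_j, r_k), where ∂ϑ_i/∂r_j denotes the derivative of t ↦ ϑ_i(r_i, t, r_k) at t = r_j and ∂ϑ_j/∂r_i denotes the derivative of t ↦ ϑ_j(t, r_j, r_k) at t = r_i; moreover this common value is ≥ 0. -/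
/-- Euclidean side length of a three-circle configuration:
`eucLen I rj rk = √(rj² + rk² + 2·I·rj·rk)`. -/
noncomputable def eucLen (I rj rk : ℝ) : ℝ :=
  Real.sqrt (rj ^ 2 + rk ^ 2 + 2 * I * rj * rk)

/-- The Euclidean inner angle `ϑ_i` at the center of the circle of radius `r_i`
in the three-circle configuration with radii `r_i, r_j, r_k` and cosines of
exterior intersection angles `I_i, I_j, I_k`.  The angles `ϑ_j, ϑ_k` are
obtained by cyclic permutation of the arguments. -/
noncomputable def eucAngle (Ii Ij Ik ri rj rk : ℝ) : ℝ :=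
  Real.arccos ((eucLen Ij rk ri ^ 2 + eucLen Ik ri rj ^ 2 - eucLen Ii rj rk ^ 2) /
    (2 * eucLen Ij rk ri * eucLen Ik ri rj))

/-!
By the law of cosines `cos ϑ_i = N / (2 l_j l_k)` with `N = l_j² + l_k² - l_i²` affine in `r_j`,
and `4 l_j² l_k² - N²` is four times a polynomial `eucHeron` in the radii (four times the squared
area) which is symmetric under `i ↔ j`. Differentiating the arccosine gives
`r_j ∂ϑ_i/∂r_j = r_i r_j P / (l_k² √eucHeron)` with
`P = r_j r_k ξ_j + r_i r_k ξ_i + r_i r_j (1 - I_k²)`, an expression symmetric in `i ↔ j` and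
nonnegative because the `ξ`'s are.
-/

open Real Set

lemma eucLen_sq {I : ℝ} (hI : I ∈ Icc (-1) 1) (a b : ℝ) :
    eucLen I a b ^ 2 = a ^ 2 + b ^ 2 + 2 * I * a * b :=
  sq_sqrt (by nlinarith [mul_nonneg (sub_nonneg.2 hI.2) (sq_nonneg (a - b)),
    mul_nonneg (neg_le_iff_add_nonneg.1 hI.1) (sq_nonneg (a + b))])

lemma sq_add_sq_add_two_mul_mul_pos {I a b : ℝ} (hI : -1 < I) (ha : 0 < a) (hb : 0 < b) :
    0 < a ^ 2 + b ^ 2 + 2 * I * a * b := by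
  nlinarith [sq_nonneg (a - b), mul_pos (neg_lt_iff_pos_add.1 hI) (mul_pos ha hb)]

lemma eucLen_pos {I a b : ℝ} (hI : -1 < I) (ha : 0 < a) (hb : 0 < b) : 0 < eucLen I a b :=
  sqrt_pos.2 (sq_add_sq_add_two_mul_mul_pos hI ha hb)

lemma eucLen_comm (I a b : ℝ) : eucLen I a b = eucLen I b a := by
  unfold eucLen
  ring_nf

lemma eucAngle_swap (Ii Ij Ik ri rj rk : ℝ) :
    eucAngle Ii Ij Ik ri rj rk = eucAngle Ii Ik Ij ri rk rj := by
  unfold eucAngle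
  rw [eucLen_comm Ij rk ri, eucLen_comm Ik ri rj, eucLen_comm Ii rj rk]
  ring_nf

/-- `4 · area² = (l_j l_k sin ϑ_i)² = l_j² l_k² - ((l_j² + l_k² - l_i²) / 2)²`,
expanded in the radii. -/
def eucHeron (Ii Ij Ik ri rj rk : ℝ) : ℝ :=
  (1 - Ii ^ 2) * (rj * rk) ^ 2 + (1 - Ij ^ 2) * (rk * ri) ^ 2 + (1 - Ik ^ 2) * (ri * rj) ^ 2 +
    2 * ri ^ 2 * (rj * rk) * (Ii + Ij * Ik) + 2 * rj ^ 2 * (rk * ri) * (Ij + Ik * Ii) +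
    2 * rk ^ 2 * (ri * rj) * (Ik + Ii * Ij)

lemma eucHeron_swap (Ii Ij Ik ri rj rk : ℝ) :
    eucHeron Ij Ii Ik rj ri rk = eucHeron Ii Ij Ik ri rj rk := by
  unfold eucHeron
  ring

lemma eucHeron_pos {Ii Ij Ik ri rj rk : ℝ} (hIi : Ii ∈ Ioc (-1) 1) (hIj : Ij ∈ Ioc (-1) 1)
    (hIk : Ik ∈ Ioc (-1) 1) (hξi : 0 ≤ Ii + Ij * Ik) (hξj : 0 ≤ Ij + Ik * Ii)
    (hξk : 0 ≤ Ik + Ii * Ij) (hri : 0 < ri) (hrj : 0 < rj) (hrk : 0 < rk) :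
    0 < eucHeron Ii Ij Ik ri rj rk := by
  obtain ⟨hIi0, hIi1⟩ := hIi
  obtain ⟨hIj0, hIj1⟩ := hIj
  obtain ⟨hIk0, hIk1⟩ := hIk
  have hi : 0 ≤ (1 - Ii ^ 2) * (rj * rk) ^ 2 := mul_nonneg (by nlinarith) (sq_nonneg _)
  have hj : 0 ≤ (1 - Ij ^ 2) * (rk * ri) ^ 2 := mul_nonneg (by nlinarith) (sq_nonneg _)
  have hk : 0 ≤ (1 - Ik ^ 2) * (ri * rj) ^ 2 := mul_nonneg (by nlinarith) (sq_nonneg _)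
  have hi' : 0 ≤ 2 * ri ^ 2 * (rj * rk) * (Ii + Ij * Ik) := mul_nonneg (by positivity) hξi
  have hj' : 0 ≤ 2 * rj ^ 2 * (rk * ri) * (Ij + Ik * Ii) := mul_nonneg (by positivity) hξj
  have hk' : 0 ≤ 2 * rk ^ 2 * (ri * rj) * (Ik + Ii * Ij) := mul_nonneg (by positivity) hξk
  unfold eucHeron
  rcases hIk1.lt_or_eq with hIk1 | rfl
  · have : 0 < (1 - Ik ^ 2) * (ri * rj) ^ 2 := mul_pos (by nlinarith) (by positivity)
    linarith
  · -- `Ik = 1` kills the `(1 - Ik²)` term, but then `ξ_k = 1 + Ii Ij > 0`.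
    have : 0 < 1 + Ii * Ij := by
      nlinarith [mul_pos (neg_lt_iff_pos_add.1 hIi0) (neg_lt_iff_pos_add.1 hIj0)]
    have : 0 < 2 * rk ^ 2 * (ri * rj) * (1 + Ii * Ij) := mul_pos (by positivity) this
    linarith

theorem hasDerivAt_arccos_div {N D : ℝ → ℝ} {N' D' x : ℝ} (hN : HasDerivAt N N' x)
    (hD : HasDerivAt D D' x) (hDpos : 0 < D x) (hND : N x ^ 2 < D x ^ 2) :
    HasDerivAt (fun t => arccos (N t / D t))
      ((N x * D' - N' * D x) / (D x * √(D x ^ 2 - N x ^ 2))) x := by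
  have hlt : (N x / D x) ^ 2 < 1 := by
    rwa [div_pow, div_lt_one (by positivity)]
  have hsqrt : √(1 - (N x / D x) ^ 2) = √(D x ^ 2 - N x ^ 2) / D x := by
    rw [div_pow, one_sub_div (by positivity), sqrt_div' _ (by positivity), sqrt_sq hDpos.le]
  have hne : √(D x ^ 2 - N x ^ 2) ≠ 0 := (sqrt_pos.2 (sub_pos.2 hND)).ne'
  have hne1 : N x / D x ≠ -1 := fun h => by norm_num [h] at hlt
  have hne1' : N x / D x ≠ 1 := fun h => by norm_num [h] at hlt
  refine ((hasDerivAt_arccos hne1 hne1').comp x (hN.div hD hDpos.ne')).congr_deriv ?_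
  rw [hsqrt]
  field_simp
  ring

theorem hasDerivAt_eucAngle_rj {Ii Ij Ik ri rj rk : ℝ} (hIi : Ii ∈ Ioc (-1) 1)
    (hIj : Ij ∈ Ioc (-1) 1) (hIk : Ik ∈ Ioc (-1) 1) (hξi : 0 ≤ Ii + Ij * Ik)
    (hξj : 0 ≤ Ij + Ik * Ii) (hξk : 0 ≤ Ik + Ii * Ij) (hri : 0 < ri) (hrj : 0 < rj)
    (hrk : 0 < rk) :
    HasDerivAt (fun t => eucAngle Ii Ij Ik ri t rk)
      (ri * (rj * rk * (Ij + Ik * Ii) + ri * rk * (Ii + Ij * Ik) + ri * rj * (1 - Ik ^ 2)) /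
        ((ri ^ 2 + rj ^ 2 + 2 * Ik * ri * rj) * √(eucHeron Ii Ij Ik ri rj rk))) rj := by
  set lj := eucLen Ij rk ri
  have hfun : (fun t => eucAngle Ii Ij Ik ri t rk) = fun t =>
      arccos ((2 * ri ^ 2 + 2 * Ij * rk * ri + 2 * (Ik * ri - Ii * rk) * t) /
        (2 * lj * √(ri ^ 2 + t ^ 2 + 2 * Ik * ri * t))) := by
    funext t
    rw [eucAngle, eucLen_sq (Ioc_subset_Icc_self hIj), eucLen_sq (Ioc_subset_Icc_self hIk),
      eucLen_sq (Ioc_subset_Icc_self hIi)]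
    congr 2
    ring
  have hN : HasDerivAt (fun t => 2 * ri ^ 2 + 2 * Ij * rk * ri + 2 * (Ik * ri - Ii * rk) * t)
      (2 * (Ik * ri - Ii * rk)) rj := by
    simpa using ((hasDerivAt_id rj).const_mul (2 * (Ik * ri - Ii * rk))).const_add
      (2 * ri ^ 2 + 2 * Ij * rk * ri)
  have hq : HasDerivAt (fun t => ri ^ 2 + t ^ 2 + 2 * Ik * ri * t) (2 * rj + 2 * Ik * ri) rj :=
    (((hasDerivAt_pow 2 rj).const_add (ri ^ 2)).add
      ((hasDerivAt_id rj).const_mul (2 * Ik * ri))).congr_deriv (by norm_num)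
  have hqpos : 0 < ri ^ 2 + rj ^ 2 + 2 * Ik * ri * rj :=
    sq_add_sq_add_two_mul_mul_pos hIk.1 hri hrj
  have hlj : 0 < lj := eucLen_pos hIj.1 hrk hri
  have hD := (hq.sqrt hqpos.ne').const_mul (2 * lj)
  have hDN : (2 * lj * √(ri ^ 2 + rj ^ 2 + 2 * Ik * ri * rj)) ^ 2 -
      (2 * ri ^ 2 + 2 * Ij * rk * ri + 2 * (Ik * ri - Ii * rk) * rj) ^ 2 =
        2 ^ 2 * eucHeron Ii Ij Ik ri rj rk := by
    rw [mul_pow, sq_sqrt hqpos.le, mul_pow, eucLen_sq (Ioc_subset_Icc_self hIj)]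
    unfold eucHeron
    ring
  have hH := eucHeron_pos hIi hIj hIk hξi hξj hξk hri hrj hrk
  rw [hfun]
  refine (hasDerivAt_arccos_div hN hD (by positivity) (by nlinarith)).congr_deriv ?_
  rw [hDN, sqrt_mul' _ hH.le, sqrt_sq zero_le_two]
  field_simp
  rw [show 2 * ri * Ik * rj = 2 * Ik * ri * rj by ring, sq_sqrt hqpos.le]
  ring

lemma cos_mem_Ioc {θ : ℝ} (h0 : 0 ≤ θ) (h1 : θ < π) : cos θ ∈ Ioc (-1) 1 :=
  ⟨by simpa using cos_lt_cos_of_nonneg_of_le_pi h0 le_rfl h1, cos_le_one θ⟩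

theorem stmt_6 (Θi Θj Θk : ℝ)
    (hi0 : 0 ≤ Θi) (hi1 : Θi < Real.pi)
    (hj0 : 0 ≤ Θj) (hj1 : Θj < Real.pi)
    (hk0 : 0 ≤ Θk) (hk1 : Θk < Real.pi)
    (hξi : 0 ≤ Real.cos Θi + Real.cos Θj * Real.cos Θk)
    (hξj : 0 ≤ Real.cos Θj + Real.cos Θk * Real.cos Θi)
    (hξk : 0 ≤ Real.cos Θk + Real.cos Θi * Real.cos Θj)
    (ri rj rk : ℝ) (hri : 0 < ri) (hrj : 0 < rj) (hrk : 0 < rk) :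
    rj * deriv (fun t => eucAngle (Real.cos Θi) (Real.cos Θj) (Real.cos Θk) ri t rk) rj
      = ri * deriv (fun t => eucAngle (Real.cos Θj) (Real.cos Θk) (Real.cos Θi) rj rk t) ri ∧
    0 ≤ rj * deriv (fun t => eucAngle (Real.cos Θi) (Real.cos Θj) (Real.cos Θk) ri t rk) rj := by
  have hIi := cos_mem_Ioc hi0 hi1
  have hIj := cos_mem_Ioc hj0 hj1
  have hIk := cos_mem_Ioc hk0 hk1
  have hϑi := hasDerivAt_eucAngle_rj hIi hIj hIk hξi hξj hξk hri hrj hrk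
  have hϑj := hasDerivAt_eucAngle_rj hIj hIi hIk (by linarith [mul_comm (cos Θk) (cos Θi)])
    (by linarith [mul_comm (cos Θj) (cos Θk)]) (by linarith [mul_comm (cos Θi) (cos Θj)])
    hrj hri hrk
  have hswap : (fun t => eucAngle (cos Θj) (cos Θk) (cos Θi) rj rk t) =
      fun t => eucAngle (cos Θj) (cos Θi) (cos Θk) rj t rk :=
    funext fun t => eucAngle_swap _ _ _ _ _ _
  rw [hswap, hϑi.deriv, hϑj.deriv, eucHeron_swap]
  have hP : 0 ≤ rj * rk * (cos Θj + cos Θk * cos Θi) +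
      ri * rk * (cos Θi + cos Θj * cos Θk) + ri * rj * (1 - cos Θk ^ 2) :=
    add_nonneg (add_nonneg (mul_nonneg (by positivity) hξj) (mul_nonneg (by positivity) hξi))
      (mul_nonneg (by positivity) (sub_nonneg.2 (cos_sq_le_one Θk)))
  have hq := sq_add_sq_add_two_mul_mul_pos hIk.1 hri hrj
  exact ⟨by ring, mul_nonneg hrj.le (div_nonneg (mul_nonneg hri.le hP)
    (mul_nonneg hq.le (sqrt_nonneg _)))⟩
end

section
/- Assume ξ_i ≥ 0, ξ_j ≥ 0, ξ_k ≥ 0. For all positive reals r_i, r_j, r_k, in the hyperbolic case one has sinh r_j · (∂ϑ_i/∂r_j)(r_i, r_j, r_k) = sinh r_i · (∂ϑ_j/∂r_i)(r_i, r_j, r_k), where ∂ϑ_i/∂r_j denotes the derivative of t ↦ ϑ_i(r_i, t, r_k) at t = r_j and ∂ϑ_j/∂r_i denotes the derivative of t ↦ ϑ_j(t, r_j, r_k) at t = r_i; moreover this common value is ≥ 0. -/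
/-!
`ϑ_i` is the law-of-cosines angle `coshLawAngle a b c` of the hyperbolic triangle with
`a = cosh l_i`, `b = cosh l_j`, `c = cosh l_k`. Its partial derivatives in `a, b, c` are
`1, (c - ab)/(b² - 1), (b - ac)/(c² - 1)` divided by `√(gramDet a b c)`, where
`gramDet a b c = sinh² l_j sinh² l_k sin² ϑ_i`; in terms of the radii, `gramDet` is a sum of
nonnegative terms, one of them a positive multiple of `1 + I_i I_j I_k > 0`.

Since `l_j` does not depend on `r_j`, the chain rule and an identity between hyperbolic
functions give `∂ϑ_i/∂r_j = sinh r_i · N / (sinh² l_k · √(gramDet a b c))` with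
`N = angleCoupling`, which is symmetric under `i ↔ j` and is a combination of `1 - I_k²`,
`ξ_i`, `ξ_j` with nonnegative coefficients. Hence `sinh r_j · ∂ϑ_i/∂r_j` is symmetric under
`i ↔ j` and nonnegative.
-/

/-- `hypCosh I rj rk` is the hyperbolic cosine of the side length `l_i` of
the hyperbolic three-circle configuration:
`cosh l_i = cosh r_j · cosh r_k + I_i · sinh r_j · sinh r_k`. -/
noncomputable def hypCosh (I rj rk : ℝ) : ℝ :=
  Real.cosh rj * Real.cosh rk + I * Real.sinh rj * Real.sinh rk

/-- The hyperbolic inner angle `ϑ_i` at the center of the circle of radius `r_i`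
in the hyperbolic three-circle configuration with radii `r_i, r_j, r_k` and
cosines of exterior intersection angles `I_i, I_j, I_k`:
`ϑ_i = arccos((cosh l_j · cosh l_k − cosh l_i)/(sinh l_j · sinh l_k))`,
where `sinh l = √(cosh² l − 1)` since `l > 0`.  The angles `ϑ_j, ϑ_k` are
obtained by cyclic permutation of the arguments. -/
noncomputable def hypAngle (Ii Ij Ik ri rj rk : ℝ) : ℝ :=
  Real.arccos ((hypCosh Ij rk ri * hypCosh Ik ri rj - hypCosh Ii rj rk) /
    (Real.sqrt (hypCosh Ij rk ri ^ 2 - 1) * Real.sqrt (hypCosh Ik ri rj ^ 2 - 1)))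

open Real

noncomputable def coshLawAngle (a b c : ℝ) : ℝ :=
  arccos ((b * c - a) / (√(b ^ 2 - 1) * √(c ^ 2 - 1)))

def gramDet (a b c : ℝ) : ℝ := 1 - a ^ 2 - b ^ 2 - c ^ 2 + 2 * a * b * c

theorem gramDet_swap (a b c : ℝ) : gramDet b a c = gramDet a b c := by
  unfold gramDet; ring

theorem one_sub_sq_coshLawCos {a b c : ℝ} (hb : 1 < b) (hc : 1 < c) :
    1 - ((b * c - a) / (√(b ^ 2 - 1) * √(c ^ 2 - 1))) ^ 2 =
      gramDet a b c / ((b ^ 2 - 1) * (c ^ 2 - 1)) := by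
  have hb2 : 0 < b ^ 2 - 1 := by nlinarith
  have hc2 : 0 < c ^ 2 - 1 := by nlinarith
  rw [div_pow, mul_pow, sq_sqrt hb2.le, sq_sqrt hc2.le, gramDet]
  field_simp
  ring

theorem hasDerivAt_coshLawAngle {a b c : ℝ → ℝ} {a' b' c' x : ℝ} (ha : HasDerivAt a a' x)
    (hb : HasDerivAt b b' x) (hc : HasDerivAt c c' x) (hb1 : 1 < b x) (hc1 : 1 < c x)
    (hQ : 0 < gramDet (a x) (b x) (c x)) :
    HasDerivAt (fun t => coshLawAngle (a t) (b t) (c t))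
      ((a' + (c x - a x * b x) / (b x ^ 2 - 1) * b' + (b x - a x * c x) / (c x ^ 2 - 1) * c')
        / √(gramDet (a x) (b x) (c x))) x := by
  have hb2 : 0 < b x ^ 2 - 1 := by nlinarith
  have hc2 : 0 < c x ^ 2 - 1 := by nlinarith
  have hsb : HasDerivAt (fun t => √(b t ^ 2 - 1)) (2 * b x * b' / (2 * √(b x ^ 2 - 1))) x := by
    simpa using ((hb.pow 2).sub_const 1).sqrt hb2.ne'
  have hsc : HasDerivAt (fun t => √(c t ^ 2 - 1)) (2 * c x * c' / (2 * √(c x ^ 2 - 1))) x := by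
    simpa using ((hc.pow 2).sub_const 1).sqrt hc2.ne'
  have hcos := ((hb.fun_mul hc).fun_sub ha).fun_div (hsb.fun_mul hsc) (by positivity)
  have hsin := one_sub_sq_coshLawCos (a := a x) hb1 hc1
  have hsin_pos : 0 < 1 - ((b x * c x - a x) / (√(b x ^ 2 - 1) * √(c x ^ 2 - 1))) ^ 2 := by
    rw [hsin]; positivity
  have hne : ∀ s : ℝ, s ^ 2 = 1 →
      (b x * c x - a x) / (√(b x ^ 2 - 1) * √(c x ^ 2 - 1)) ≠ s := by
    rintro s hs rfl; linarith
  refine ((hasDerivAt_arccos (hne (-1) (by norm_num)) (hne 1 (by norm_num))).comp x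
    hcos).congr_deriv ?_
  rw [hsin, sqrt_div hQ.le, sqrt_mul hb2.le]
  have hsb2 := sq_sqrt hb2.le
  have hsc2 := sq_sqrt hc2.le
  have : 0 < √(b x ^ 2 - 1) := sqrt_pos.2 hb2
  have : 0 < √(c x ^ 2 - 1) := sqrt_pos.2 hc2
  have : 0 < √(gramDet (a x) (b x) (c x)) := sqrt_pos.2 hQ
  generalize √(b x ^ 2 - 1) = sb at *
  generalize √(c x ^ 2 - 1) = sc at *
  rw [← hsb2, ← hsc2]
  field_simp
  -- what remains holds only modulo `sb² = b² - 1` and `sc² = c² - 1`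
  linear_combination (-(sc ^ 2 * c x * b')) * hsb2 - sb ^ 2 * b x * c' * hsc2

theorem hypCosh_comm (I x y : ℝ) : hypCosh I x y = hypCosh I y x := by
  unfold hypCosh; ring

theorem one_lt_hypCosh {I x y : ℝ} (hI : -1 < I) (hx : 0 < x) (hy : 0 < y) :
    1 < hypCosh I x y := by
  have hcosh : hypCosh I x y = cosh (x - y) + (1 + I) * (sinh x * sinh y) := by
    rw [hypCosh, cosh_sub]; ring
  have : 0 < (1 + I) * (sinh x * sinh y) := by
    have := sinh_pos_iff.2 hx
    have := sinh_pos_iff.2 hy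
    have : 0 < 1 + I := by linarith
    positivity
  linarith [one_le_cosh (x - y)]

theorem hasDerivAt_hypCosh_left (I x y : ℝ) :
    HasDerivAt (fun t => hypCosh I t y) (sinh x * cosh y + I * cosh x * sinh y) x :=
  ((hasDerivAt_cosh x).mul_const _).add (((hasDerivAt_sinh x).const_mul I).mul_const _)

theorem hasDerivAt_hypCosh_right (I x y : ℝ) :
    HasDerivAt (fun t => hypCosh I x t) (cosh x * sinh y + I * sinh x * cosh y) y := by
  simp only [hypCosh_comm I x]
  convert hasDerivAt_hypCosh_left I y x using 1
  ring

theorem hypAngle_eq_coshLawAngle (Ii Ij Ik ri rj rk : ℝ) :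
    hypAngle Ii Ij Ik ri rj rk =
      coshLawAngle (hypCosh Ii rj rk) (hypCosh Ij rk ri) (hypCosh Ik ri rj) :=
  rfl

theorem hypAngle_swap (Ii Ij Ik ri rj rk : ℝ) :
    hypAngle Ii Ij Ik ri rj rk = hypAngle Ii Ik Ij ri rk rj := by
  simp only [hypAngle, hypCosh_comm _ ri, hypCosh_comm Ii rk, mul_comm (hypCosh Ij _ _),
    mul_comm √(hypCosh Ij _ _ ^ 2 - 1)]

theorem gramDet_hypCosh (Ii Ij Ik ri rj rk : ℝ) :
    gramDet (hypCosh Ii rj rk) (hypCosh Ij rk ri) (hypCosh Ik ri rj) =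
      sinh rj ^ 2 * sinh rk ^ 2 * (1 - Ii ^ 2) + sinh rk ^ 2 * sinh ri ^ 2 * (1 - Ij ^ 2)
      + sinh ri ^ 2 * sinh rj ^ 2 * (1 - Ik ^ 2)
      + 2 * sinh ri ^ 2 * sinh rj ^ 2 * sinh rk ^ 2 * (1 + Ii * Ij * Ik)
      + 2 * sinh ri ^ 2 * sinh rj * sinh rk * cosh rj * cosh rk * (Ii + Ij * Ik)
      + 2 * sinh rj ^ 2 * sinh rk * sinh ri * cosh rk * cosh ri * (Ij + Ik * Ii)
      + 2 * sinh rk ^ 2 * sinh ri * sinh rj * cosh ri * cosh rj * (Ik + Ii * Ij) := by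
  simp only [gramDet, hypCosh, cosh_eq, sinh_eq, exp_neg]
  field_simp
  ring

theorem one_add_mul_mul_pos {x y z : ℝ} (hx : -1 < x) (hx' : x ≤ 1) (hy : -1 < y)
    (hy' : y ≤ 1) (hz : -1 < z) (hz' : z ≤ 1) : 0 < 1 + x * y * z := by
  -- `4 (1 + x y z)` is the sum of the four products `(1 ± x)(1 ± y)(1 ± z)` with an even
  -- number of minus signs.
  have h₀ : 0 < (1 + x) * (1 + y) * (1 + z) := by
    have : 0 < 1 + x := by linarith
    have : 0 < 1 + y := by linarith
    have : 0 < 1 + z := by linarith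
    positivity
  have h₁ : 0 ≤ (1 + x) * (1 - y) * (1 - z) :=
    mul_nonneg (mul_nonneg (by linarith) (by linarith)) (by linarith)
  have h₂ : 0 ≤ (1 - x) * (1 + y) * (1 - z) :=
    mul_nonneg (mul_nonneg (by linarith) (by linarith)) (by linarith)
  have h₃ : 0 ≤ (1 - x) * (1 - y) * (1 + z) :=
    mul_nonneg (mul_nonneg (by linarith) (by linarith)) (by linarith)
  linarith

theorem gramDet_hypCosh_pos {Ii Ij Ik ri rj rk : ℝ}
    (hIi : -1 < Ii) (hIi' : Ii ≤ 1) (hIj : -1 < Ij) (hIj' : Ij ≤ 1)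
    (hIk : -1 < Ik) (hIk' : Ik ≤ 1)
    (hξi : 0 ≤ Ii + Ij * Ik) (hξj : 0 ≤ Ij + Ik * Ii) (hξk : 0 ≤ Ik + Ii * Ij)
    (hri : 0 < ri) (hrj : 0 < rj) (hrk : 0 < rk) :
    0 < gramDet (hypCosh Ii rj rk) (hypCosh Ij rk ri) (hypCosh Ik ri rj) := by
  have := sinh_pos_iff.2 hri
  have := sinh_pos_iff.2 hrj
  have := sinh_pos_iff.2 hrk
  have := cosh_pos ri
  have := cosh_pos rj
  have := cosh_pos rk
  have h1i : 0 ≤ 1 - Ii ^ 2 := by nlinarith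
  have h1j : 0 ≤ 1 - Ij ^ 2 := by nlinarith
  have h1k : 0 ≤ 1 - Ik ^ 2 := by nlinarith
  have h3 := one_add_mul_mul_pos hIi hIi' hIj hIj' hIk hIk'
  rw [gramDet_hypCosh]
  have := mul_nonneg (by positivity : 0 ≤ sinh rj ^ 2 * sinh rk ^ 2) h1i
  have := mul_nonneg (by positivity : 0 ≤ sinh rk ^ 2 * sinh ri ^ 2) h1j
  have := mul_nonneg (by positivity : 0 ≤ sinh ri ^ 2 * sinh rj ^ 2) h1k
  have := mul_pos (by positivity : 0 < 2 * sinh ri ^ 2 * sinh rj ^ 2 * sinh rk ^ 2) h3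
  have := mul_nonneg
    (by positivity : 0 ≤ 2 * sinh ri ^ 2 * sinh rj * sinh rk * cosh rj * cosh rk) hξi
  have := mul_nonneg
    (by positivity : 0 ≤ 2 * sinh rj ^ 2 * sinh rk * sinh ri * cosh rk * cosh ri) hξj
  have := mul_nonneg
    (by positivity : 0 ≤ 2 * sinh rk ^ 2 * sinh ri * sinh rj * cosh ri * cosh rj) hξk
  linarith

noncomputable def angleCoupling (Ii Ij Ik ri rj rk : ℝ) : ℝ :=
  sinh ri * sinh rj * cosh rk * (1 - Ik ^ 2) + sinh ri * cosh rj * sinh rk * (Ii + Ij * Ik)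
    + cosh ri * sinh rj * sinh rk * (Ij + Ik * Ii)

theorem angleCoupling_swap (Ii Ij Ik ri rj rk : ℝ) :
    angleCoupling Ij Ii Ik rj ri rk = angleCoupling Ii Ij Ik ri rj rk := by
  unfold angleCoupling; ring

theorem angleCoupling_nonneg {Ii Ij Ik ri rj rk : ℝ} (hIk : -1 ≤ Ik) (hIk' : Ik ≤ 1)
    (hξi : 0 ≤ Ii + Ij * Ik) (hξj : 0 ≤ Ij + Ik * Ii)
    (hri : 0 < ri) (hrj : 0 < rj) (hrk : 0 < rk) :
    0 ≤ angleCoupling Ii Ij Ik ri rj rk := by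
  have := (sinh_pos_iff.2 hri).le
  have := (sinh_pos_iff.2 hrj).le
  have := (sinh_pos_iff.2 hrk).le
  have h1k : 0 ≤ 1 - Ik ^ 2 := by nlinarith
  unfold angleCoupling
  have := cosh_pos rk
  have := cosh_pos ri
  have := cosh_pos rj
  have := mul_nonneg (by positivity : 0 ≤ sinh ri * sinh rj * cosh rk) h1k
  have := mul_nonneg (by positivity : 0 ≤ sinh ri * cosh rj * sinh rk) hξi
  have := mul_nonneg (by positivity : 0 ≤ cosh ri * sinh rj * sinh rk) hξj
  linarith

theorem sinh_mul_angleCoupling (Ii Ij Ik ri rj rk : ℝ) :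
    sinh ri * angleCoupling Ii Ij Ik ri rj rk =
      (sinh rj * cosh rk + Ii * cosh rj * sinh rk) * (hypCosh Ik ri rj ^ 2 - 1)
        + (hypCosh Ij rk ri - hypCosh Ii rj rk * hypCosh Ik ri rj)
          * (cosh ri * sinh rj + Ik * sinh ri * cosh rj) := by
  simp only [angleCoupling, hypCosh, cosh_eq, sinh_eq, exp_neg]
  field_simp
  ring

theorem hasDerivAt_hypAngle_snd {Ii Ij Ik ri rj rk : ℝ} (hb : 1 < hypCosh Ij rk ri)
    (hc : 1 < hypCosh Ik ri rj)
    (hQ : 0 < gramDet (hypCosh Ii rj rk) (hypCosh Ij rk ri) (hypCosh Ik ri rj)) :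
    HasDerivAt (fun t => hypAngle Ii Ij Ik ri t rk)
      (sinh ri * angleCoupling Ii Ij Ik ri rj rk / ((hypCosh Ik ri rj ^ 2 - 1) *
        √(gramDet (hypCosh Ii rj rk) (hypCosh Ij rk ri) (hypCosh Ik ri rj)))) rj := by
  simp only [hypAngle_eq_coshLawAngle]
  refine (hasDerivAt_coshLawAngle (hasDerivAt_hypCosh_left Ii rj rk)
    (hasDerivAt_const rj (hypCosh Ij rk ri)) (hasDerivAt_hypCosh_right Ik ri rj) hb hc
    hQ).congr_deriv ?_
  have : 0 < hypCosh Ik ri rj ^ 2 - 1 := by nlinarith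
  rw [sinh_mul_angleCoupling]
  field_simp
  ring

theorem neg_one_lt_cos_of_mem_Ico {θ : ℝ} (h₀ : 0 ≤ θ) (h₁ : θ < π) : -1 < cos θ := by
  simpa using cos_lt_cos_of_nonneg_of_le_pi h₀ le_rfl h₁

theorem stmt_7 (Θi Θj Θk : ℝ)
    (hi0 : 0 ≤ Θi) (hi1 : Θi < Real.pi)
    (hj0 : 0 ≤ Θj) (hj1 : Θj < Real.pi)
    (hk0 : 0 ≤ Θk) (hk1 : Θk < Real.pi)
    (hξi : 0 ≤ Real.cos Θi + Real.cos Θj * Real.cos Θk)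
    (hξj : 0 ≤ Real.cos Θj + Real.cos Θk * Real.cos Θi)
    (hξk : 0 ≤ Real.cos Θk + Real.cos Θi * Real.cos Θj)
    (ri rj rk : ℝ) (hri : 0 < ri) (hrj : 0 < rj) (hrk : 0 < rk) :
    Real.sinh rj *
        deriv (fun t => hypAngle (Real.cos Θi) (Real.cos Θj) (Real.cos Θk) ri t rk) rj
      = Real.sinh ri *
        deriv (fun t => hypAngle (Real.cos Θj) (Real.cos Θk) (Real.cos Θi) rj rk t) ri ∧
    0 ≤ Real.sinh rj *
        deriv (fun t => hypAngle (Real.cos Θi) (Real.cos Θj) (Real.cos Θk) ri t rk) rj := by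
  have hIi := neg_one_lt_cos_of_mem_Ico hi0 hi1
  have hIj := neg_one_lt_cos_of_mem_Ico hj0 hj1
  have hIk := neg_one_lt_cos_of_mem_Ico hk0 hk1
  have hQ := gramDet_hypCosh_pos hIi (cos_le_one _) hIj (cos_le_one _) hIk (cos_le_one _)
    hξi hξj hξk hri hrj hrk
  have hθi := hasDerivAt_hypAngle_snd (one_lt_hypCosh hIj hrk hri) (one_lt_hypCosh hIk hri hrj) hQ
  have hθj := hasDerivAt_hypAngle_snd (Ii := cos Θj) (Ij := cos Θi) (ri := rj) (rj := ri)
    (one_lt_hypCosh hIi hrk hrj) (one_lt_hypCosh hIk hrj hri)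
    (by rwa [gramDet_swap, hypCosh_comm _ rk rj, hypCosh_comm _ ri rk, hypCosh_comm _ rj ri])
  simp only [hypAngle_swap (cos Θj) (cos Θi)] at hθj
  rw [hθi.deriv, hθj.deriv, angleCoupling_swap (cos Θi), gramDet_swap (hypCosh _ rk rj),
    hypCosh_comm _ rk rj, hypCosh_comm _ ri rk, hypCosh_comm _ rj ri]
  refine ⟨by ring, ?_⟩
  have hN := angleCoupling_nonneg (Ii := cos Θi) (Ij := cos Θj) hIk.le (cos_le_one _) hξi hξj
    hri hrj hrk
  have hc : 0 ≤ hypCosh (cos Θk) ri rj ^ 2 - 1 := by nlinarith [one_lt_hypCosh hIk hri hrj]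
  exact mul_nonneg (sinh_pos_iff.2 hrj).le <| div_nonneg
    (mul_nonneg (sinh_pos_iff.2 hri).le hN) (mul_nonneg hc (sqrt_nonneg _))
end

section
/- Assume ξ_i ≥ 0, ξ_j ≥ 0, ξ_k ≥ 0, and let c be a positive real. Then the sum of hyperbolic inner angles ϑ_i(r_i, r_j, r_k) + ϑ_j(r_i, r_j, r_k) tends to π as (r_i, r_j, r_k) tends to (0, 0, c) within the open positive octant (0,∞)³. -/
/-! On the open octant the numbers `Cᵢ = cosh lᵢ` exceed `1`, and `ξ ≥ 0` makes them satisfy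
the Gram inequality `Cᵢ² + Cⱼ² + Cₖ² ≤ 1 + 2 Cᵢ Cⱼ Cₖ`, i.e. the triangle inequalities. Hence
`0 ≤ cos ϑᵢ + cos ϑⱼ ≤ sinh (lᵢ + lⱼ) tanh (lₖ / 2) / (sinh lᵢ sinh lⱼ)`, and the bound tends
to `0` because `lₖ → 0` while `lᵢ, lⱼ → c > 0`. Finally
`arccos x + arccos y = π - (arcsin x - arcsin (-y))` and `arcsin` is uniformly continuous, so
`ϑᵢ + ϑⱼ → π`. -/

open Filter Topology Real Uniformity

lemma Real.uniformContinuous_arcsin : UniformContinuous arcsin := by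
  have hIcc : UniformContinuous fun x : Set.Icc (-1 : ℝ) 1 => arcsin x :=
    CompactSpace.uniformContinuous_of_continuous (continuous_arcsin.comp continuous_subtype_val)
  simpa only [Function.comp_def, arcsin_projIcc] using
    hIcc.comp (LipschitzWith.projIcc (neg_le_self zero_le_one)).uniformContinuous

lemma Real.tendsto_arccos_add_arccos {α : Type*} {l : Filter α} {f g : α → ℝ}
    (h : Tendsto (fun x => f x + g x) l (𝓝 0)) :
    Tendsto (fun x => arccos (f x) + arccos (g x)) l (𝓝 π) := by
  have hfg : Tendsto (fun x => (f x, -g x)) l (𝓤 ℝ) := by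
    rw [tendsto_uniformity_iff_dist_tendsto_zero]
    simpa [Real.dist_eq] using h.abs
  have harcsin :=
    tendsto_uniformity_iff_dist_tendsto_zero.1 (Tendsto.comp uniformContinuous_arcsin hfg)
  rw [tendsto_iff_dist_tendsto_zero]
  refine harcsin.congr fun x => ?_
  simp only [Function.comp_apply, Real.dist_eq, arcsin_neg, arccos_eq_pi_div_two_sub_arcsin]
  rw [← abs_neg]
  ring_nf

lemma one_lt_hypCosh_s14 {I a b : ℝ} (hI : -1 < I) (ha : 0 < a) (hb : 0 < b) :
    1 < hypCosh I a b := by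
  have hcosh : hypCosh I a b = cosh (a - b) + (1 + I) * (sinh a * sinh b) := by
    rw [hypCosh, cosh_sub]; ring
  rw [hcosh]
  have := one_le_cosh (a - b)
  have : 0 < (1 + I) * (sinh a * sinh b) :=
    mul_pos (by linarith) (mul_pos (sinh_pos_iff.2 ha) (sinh_pos_iff.2 hb))
  linarith

-- The Gram defect `1 + 2 Cᵢ Cⱼ Cₖ - Cᵢ² - Cⱼ² - Cₖ²` expands into a sum of terms that are
-- nonnegative because `|I| ≤ 1` and `ξ ≥ 0`.
lemma hypCosh_sq_add_sq_add_sq_le {Ii Ij Ik ri rj rk : ℝ}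
    (hIi : |Ii| ≤ 1) (hIj : |Ij| ≤ 1) (hIk : |Ik| ≤ 1)
    (hξi : 0 ≤ Ii + Ij * Ik) (hξj : 0 ≤ Ij + Ik * Ii) (hξk : 0 ≤ Ik + Ii * Ij)
    (hri : 0 ≤ ri) (hrj : 0 ≤ rj) (hrk : 0 ≤ rk) :
    hypCosh Ii rj rk ^ 2 + hypCosh Ij rk ri ^ 2 + hypCosh Ik ri rj ^ 2
      ≤ 1 + 2 * hypCosh Ii rj rk * hypCosh Ij rk ri * hypCosh Ik ri rj := by
  have hsq : ∀ {I : ℝ}, |I| ≤ 1 → 0 ≤ 1 - I ^ 2 := fun h =>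
    sub_nonneg.2 ((sq_le_one_iff_abs_le_one _).2 h)
  have hprod : 0 ≤ 1 + Ii * Ij * Ik := by
    have : |Ii * Ij * Ik| ≤ 1 := by
      rw [abs_mul, abs_mul]
      exact mul_le_one₀ (mul_le_one₀ hIi (abs_nonneg _) hIj) (abs_nonneg _) hIk
    linarith [neg_abs_le (Ii * Ij * Ik)]
  set T := sinh rj ^ 2 * sinh rk ^ 2 * (1 - Ii ^ 2) + sinh rk ^ 2 * sinh ri ^ 2 * (1 - Ij ^ 2)
      + sinh ri ^ 2 * sinh rj ^ 2 * (1 - Ik ^ 2)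
      + 2 * sinh ri ^ 2 * sinh rj * sinh rk * cosh rj * cosh rk * (Ii + Ij * Ik)
      + 2 * sinh rj ^ 2 * sinh rk * sinh ri * cosh rk * cosh ri * (Ij + Ik * Ii)
      + 2 * sinh rk ^ 2 * sinh ri * sinh rj * cosh ri * cosh rj * (Ik + Ii * Ij)
      + 2 * sinh ri ^ 2 * sinh rj ^ 2 * sinh rk ^ 2 * (1 + Ii * Ij * Ik) with hTdef
  have hT : 0 ≤ T := by
    have := hsq hIi; have := hsq hIj; have := hsq hIk
    have := sinh_nonneg_iff.2 hri; have := sinh_nonneg_iff.2 hrj; have := sinh_nonneg_iff.2 hrk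
    positivity
  have hgram : hypCosh Ii rj rk ^ 2 + hypCosh Ij rk ri ^ 2 + hypCosh Ik ri rj ^ 2 + T
      = 1 + 2 * hypCosh Ii rj rk * hypCosh Ij rk ri * hypCosh Ik ri rj := by
    rw [hTdef]
    simp only [hypCosh]
    linear_combination
      (cosh rk ^ 2 + cosh rj ^ 2 - 2 * cosh rj ^ 2 * cosh rk ^ 2
        - 2 * sinh rj * sinh rk * cosh rj * cosh rk * Ii) * cosh_sq ri
      + (1 - cosh rk ^ 2 - 2 * sinh ri * sinh rk * cosh ri * cosh rk * Ij + sinh ri ^ 2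
        - 2 * sinh ri ^ 2 * cosh rk ^ 2) * cosh_sq rj
      + (-sinh rj ^ 2 - 2 * sinh ri * sinh rj * cosh ri * cosh rj * Ik - sinh ri ^ 2
        - 2 * sinh ri ^ 2 * sinh rj ^ 2) * cosh_sq rk
  linarith

-- With `Cᵢ = hypCosh Iᵢ rⱼ rₖ` (cyclically), `hypAngle I r = arccos (hypCosAngle Cᵢ Cⱼ Cₖ)`
-- holds by `rfl`.
noncomputable def hypCosAngle (Ci Cj Ck : ℝ) : ℝ :=
  (Cj * Ck - Ci) / (√(Cj ^ 2 - 1) * √(Ck ^ 2 - 1))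

-- In terms of the side lengths this is `sinh (lᵢ + lⱼ) * tanh (lₖ / 2) / (sinh lᵢ * sinh lⱼ)`.
noncomputable def hypCosAngleSumBound (Ci Cj Ck : ℝ) : ℝ :=
  (√(Ci ^ 2 - 1) * Cj + √(Cj ^ 2 - 1) * Ci) * √(Ck ^ 2 - 1) /
    (√(Ci ^ 2 - 1) * √(Cj ^ 2 - 1) * (Ck + 1))

section HypTriangle

variable {Ci Cj Ck : ℝ}

lemma one_le_mul_sub_sqrt_mul_sqrt (hi : 1 ≤ Ci) (hj : 1 ≤ Cj) :
    1 ≤ Ci * Cj - √(Ci ^ 2 - 1) * √(Cj ^ 2 - 1) := by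
  have hle : √(Ci ^ 2 - 1) * √(Cj ^ 2 - 1) ≤ Ci * Cj - 1 := by
    rw [← sqrt_mul (by nlinarith)]
    exact sqrt_le_iff.2 ⟨by nlinarith, by nlinarith [sq_nonneg (Ci - Cj)]⟩
  linarith

lemma mul_sub_sqrt_mul_sqrt_le (hi : 1 ≤ Ci)
    (hgram : Ci ^ 2 + Cj ^ 2 + Ck ^ 2 ≤ 1 + 2 * Ci * Cj * Ck) :
    Ci * Cj - √(Ci ^ 2 - 1) * √(Cj ^ 2 - 1) ≤ Ck := by
  have : |Ci * Cj - Ck| ≤ √(Ci ^ 2 - 1) * √(Cj ^ 2 - 1) := by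
    rw [← sqrt_mul (by nlinarith)]
    exact abs_le_sqrt (by linarith)
  linarith [le_abs_self (Ci * Cj - Ck)]

lemma hypCosAngle_add_hypCosAngle (hi : 1 < Ci) (hj : 1 < Cj) (hk : 1 < Ck) :
    hypCosAngle Ci Cj Ck + hypCosAngle Cj Ck Ci
      = (√(Ci ^ 2 - 1) * Cj + √(Cj ^ 2 - 1) * Ci)
          * (Ck - (Ci * Cj - √(Ci ^ 2 - 1) * √(Cj ^ 2 - 1)))
          / (√(Ci ^ 2 - 1) * √(Cj ^ 2 - 1) * √(Ck ^ 2 - 1)) := by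
  have hSi := sq_sqrt (show 0 ≤ Ci ^ 2 - 1 by nlinarith)
  have hSj := sq_sqrt (show 0 ≤ Cj ^ 2 - 1 by nlinarith)
  have := sqrt_pos.2 (show 0 < Ci ^ 2 - 1 by nlinarith)
  have := sqrt_pos.2 (show 0 < Cj ^ 2 - 1 by nlinarith)
  have := sqrt_pos.2 (show 0 < Ck ^ 2 - 1 by nlinarith)
  rw [hypCosAngle, hypCosAngle]
  field_simp
  linear_combination (-(√(Cj ^ 2 - 1) * Cj)) * hSi + (-(√(Ci ^ 2 - 1) * Ci)) * hSj

lemma hypCosAngle_add_hypCosAngle_nonneg (hi : 1 < Ci) (hj : 1 < Cj) (hk : 1 < Ck)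
    (hgram : Ci ^ 2 + Cj ^ 2 + Ck ^ 2 ≤ 1 + 2 * Ci * Cj * Ck) :
    0 ≤ hypCosAngle Ci Cj Ck + hypCosAngle Cj Ck Ci := by
  rw [hypCosAngle_add_hypCosAngle hi hj hk]
  have hCi : 0 < Ci := by linarith
  have hCj : 0 < Cj := by linarith
  have hW := sub_nonneg.2 (mul_sub_sqrt_mul_sqrt_le hi.le hgram)
  exact div_nonneg (mul_nonneg (by positivity) hW) (by positivity)

lemma hypCosAngle_add_hypCosAngle_le (hi : 1 < Ci) (hj : 1 < Cj) (hk : 1 < Ck) :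
    hypCosAngle Ci Cj Ck + hypCosAngle Cj Ck Ci ≤ hypCosAngleSumBound Ci Cj Ck := by
  have hSk := sq_sqrt (show 0 ≤ Ck ^ 2 - 1 by nlinarith)
  have := sqrt_pos.2 (show 0 < Ci ^ 2 - 1 by nlinarith)
  have := sqrt_pos.2 (show 0 < Cj ^ 2 - 1 by nlinarith)
  have := sqrt_pos.2 (show 0 < Ck ^ 2 - 1 by nlinarith)
  have hW := one_le_mul_sub_sqrt_mul_sqrt hi.le hj.le
  rw [hypCosAngle_add_hypCosAngle hi hj hk, hypCosAngleSumBound]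
  calc _ ≤ (√(Ci ^ 2 - 1) * Cj + √(Cj ^ 2 - 1) * Ci) * (Ck - 1)
          / (√(Ci ^ 2 - 1) * √(Cj ^ 2 - 1) * √(Ck ^ 2 - 1)) := by
        gcongr
    _ = _ := by
        field_simp
        linear_combination -hSk

end HypTriangle

lemma tendsto_hypCosAngleSumBound {α : Type*} {l : Filter α} {Ci Cj Ck : α → ℝ} {a b : ℝ}
    (ha : 1 < a) (hb : 1 < b) (hi : Tendsto Ci l (𝓝 a)) (hj : Tendsto Cj l (𝓝 b))
    (hk : Tendsto Ck l (𝓝 1)) :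
    Tendsto (fun x => hypCosAngleSumBound (Ci x) (Cj x) (Ck x)) l (𝓝 0) := by
  have hsinh : ∀ {C : α → ℝ} {c : ℝ}, Tendsto C l (𝓝 c) →
      Tendsto (fun x => √(C x ^ 2 - 1)) l (𝓝 √(c ^ 2 - 1)) :=
    fun h => ((h.pow 2).sub_const 1).sqrt
  have hden : √(a ^ 2 - 1) * √(b ^ 2 - 1) * (1 + 1) ≠ 0 := by
    have := sqrt_pos.2 (show 0 < a ^ 2 - 1 by nlinarith)
    have := sqrt_pos.2 (show 0 < b ^ 2 - 1 by nlinarith)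
    positivity
  simpa [hypCosAngleSumBound, Pi.div_def] using
    ((((hsinh hi).mul hj).add ((hsinh hj).mul hi)).mul (hsinh hk)).div
      (((hsinh hi).mul (hsinh hj)).mul (hk.add_const 1)) hden

lemma tendsto_hypCosh {α : Type*} {l : Filter α} {a b : α → ℝ} {a₀ b₀ : ℝ} (I : ℝ)
    (ha : Tendsto a l (𝓝 a₀)) (hb : Tendsto b l (𝓝 b₀)) :
    Tendsto (fun x => hypCosh I (a x) (b x)) l (𝓝 (hypCosh I a₀ b₀)) :=
  (((continuous_cosh.tendsto _).comp ha).mul ((continuous_cosh.tendsto _).comp hb)).add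
    ((((continuous_sinh.tendsto _).comp ha).const_mul I).mul
      ((continuous_sinh.tendsto _).comp hb))

lemma Real.neg_one_lt_cos_of_nonneg_of_lt_pi {x : ℝ} (h0 : 0 ≤ x) (hπ : x < π) :
    -1 < cos x := by
  simpa using cos_lt_cos_of_nonneg_of_le_pi h0 le_rfl hπ

theorem stmt_14 (Θi Θj Θk : ℝ)
    (hi0 : 0 ≤ Θi) (hi1 : Θi < Real.pi)
    (hj0 : 0 ≤ Θj) (hj1 : Θj < Real.pi)
    (hk0 : 0 ≤ Θk) (hk1 : Θk < Real.pi)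
    (hξi : 0 ≤ Real.cos Θi + Real.cos Θj * Real.cos Θk)
    (hξj : 0 ≤ Real.cos Θj + Real.cos Θk * Real.cos Θi)
    (hξk : 0 ≤ Real.cos Θk + Real.cos Θi * Real.cos Θj)
    (c : ℝ) (hc : 0 < c) :
    Filter.Tendsto
      (fun p : ℝ × ℝ × ℝ =>
        hypAngle (Real.cos Θi) (Real.cos Θj) (Real.cos Θk) p.1 p.2.1 p.2.2
          + hypAngle (Real.cos Θj) (Real.cos Θk) (Real.cos Θi) p.2.1 p.2.2 p.1)
      (nhdsWithin (0, 0, c) (Set.Ioi 0 ×ˢ Set.Ioi 0 ×ˢ Set.Ioi 0))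
      (nhds Real.pi) := by
  set F := 𝓝[Set.Ioi 0 ×ˢ Set.Ioi 0 ×ˢ Set.Ioi 0] ((0 : ℝ), (0 : ℝ), c)
  set Ci := fun p : ℝ × ℝ × ℝ => hypCosh (cos Θi) p.2.1 p.2.2
  set Cj := fun p : ℝ × ℝ × ℝ => hypCosh (cos Θj) p.2.2 p.1
  set Ck := fun p : ℝ × ℝ × ℝ => hypCosh (cos Θk) p.1 p.2.1
  have hbounds : ∀ᶠ p in F, hypCosAngle (Ci p) (Cj p) (Ck p) + hypCosAngle (Cj p) (Ck p) (Ci p)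
      ∈ Set.Icc 0 (hypCosAngleSumBound (Ci p) (Cj p) (Ck p)) := by
    filter_upwards [self_mem_nhdsWithin] with ⟨ri, rj, rk⟩ ⟨hri, hrj, hrk⟩
    have hi := one_lt_hypCosh_s14 (neg_one_lt_cos_of_nonneg_of_lt_pi hi0 hi1) hrj hrk
    have hj := one_lt_hypCosh_s14 (neg_one_lt_cos_of_nonneg_of_lt_pi hj0 hj1) hrk hri
    have hk := one_lt_hypCosh_s14 (neg_one_lt_cos_of_nonneg_of_lt_pi hk0 hk1) hri hrj
    exact ⟨hypCosAngle_add_hypCosAngle_nonneg hi hj hk <| hypCosh_sq_add_sq_add_sq_le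
      (abs_cos_le_one _) (abs_cos_le_one _) (abs_cos_le_one _) hξi hξj hξk hri.le hrj.le hrk.le,
      hypCosAngle_add_hypCosAngle_le hi hj hk⟩
  have hr : Tendsto id F (𝓝 ((0 : ℝ), (0 : ℝ), c)) := nhdsWithin_le_nhds
  have hbound : Tendsto (fun p => hypCosAngleSumBound (Ci p) (Cj p) (Ck p)) F (𝓝 0) := by
    refine tendsto_hypCosAngleSumBound (one_lt_cosh.2 hc.ne') (one_lt_cosh.2 hc.ne') ?_ ?_ ?_
    · simpa [Ci, hypCosh] using tendsto_hypCosh (cos Θi) hr.snd_nhds.fst_nhds hr.snd_nhds.snd_nhds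
    · simpa [Cj, hypCosh] using tendsto_hypCosh (cos Θj) hr.snd_nhds.snd_nhds hr.fst_nhds
    · simpa [Ck, hypCosh] using tendsto_hypCosh (cos Θk) hr.fst_nhds hr.snd_nhds.fst_nhds
  exact tendsto_arccos_add_arccos <| tendsto_of_tendsto_of_tendsto_of_le_of_le'
    tendsto_const_nhds hbound (hbounds.mono fun _ h => h.1) (hbounds.mono fun _ h => h.2)
end
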